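/- arXiv:1404.1774 — 2 statements merged into one kernel-verified Lean document; each statement's English description precedes it below -/
import Mathlib

section
/- If 𝒢 is a signature Gröbner basis for the ideal I = ⟨f₁,…,f_m⟩, then the set {ᾱ : α ∈ 𝒢, ᾱ ≠ 0} of projected polynomials is a Gröbner basis for I. -/
open MvPolynomial

namespace SigGB

/-- A monomial order on the monomials of `R = K[x₁,…,xₙ]` (represented by their
exponent vectors in `Fin n →₀ ℕ`) together with a compatible module monomial order
on the module monomials of `R^m` (represented by pairs `(μ, i)` for `x^μ·eᵢ`). -/
structure SigOrder (n m : ℕ) : Type where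
  /-- the monomial order `≤` on `R` -/
  rle : (Fin n →₀ ℕ) → (Fin n →₀ ℕ) → Prop
  /-- the module monomial order `≤` on `R^m` -/
  mle : (Fin n →₀ ℕ) × Fin m → (Fin n →₀ ℕ) × Fin m → Prop
  rle_refl : ∀ a, rle a a
  rle_trans : ∀ {a b c}, rle a b → rle b c → rle a c
  rle_antisymm : ∀ {a b}, rle a b → rle b a → a = b
  rle_total : ∀ a b, rle a b ∨ rle b a
  rle_wf : WellFounded fun a b => rle a b ∧ a ≠ b
  rle_add : ∀ (c : Fin n →₀ ℕ) {a b}, rle a b → rle (c + a) (c + b)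
  mle_refl : ∀ S, mle S S
  mle_trans : ∀ {S T U}, mle S T → mle T U → mle S U
  mle_antisymm : ∀ {S T}, mle S T → mle T S → S = T
  mle_total : ∀ S T, mle S T ∨ mle T S
  mle_wf : WellFounded fun S T => mle S T ∧ S ≠ T
  mle_add : ∀ (c : Fin n →₀ ℕ) {S T}, mle S T → mle (c + S.1, S.2) (c + T.1, T.2)
  compat : ∀ (a b : Fin n →₀ ℕ) (i : Fin m), rle a b ↔ mle (a, i) (b, i)

variable {K : Type*} [Field K] {n m : ℕ}

/-- the strict monomial order -/
def SigOrder.rlt (O : SigOrder n m) (a b : Fin n →₀ ℕ) : Prop :=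
  O.rle a b ∧ a ≠ b

/-- the strict module monomial order -/
def SigOrder.mlt (O : SigOrder n m) (S T : (Fin n →₀ ℕ) × Fin m) : Prop :=
  O.mle S T ∧ S ≠ T

/-- divisibility of module monomials: `S ∣ T` iff `T = c·S` for some monomial `c` -/
def mmDvd (S T : (Fin n →₀ ℕ) × Fin m) : Prop :=
  ∃ c : Fin n →₀ ℕ, T = (c + S.1, S.2)

/-- `π : R^m → R`, `α ↦ Σ αᵢ fᵢ` -/
noncomputable def proj (f α : Fin m → MvPolynomial (Fin n) K) : MvPolynomial (Fin n) K :=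
  ∑ i, α i * f i

open Classical in
/-- the `≤`-maximal monomial of `p` (junk value `0` for `p = 0`) -/
noncomputable def leadMon (O : SigOrder n m) (p : MvPolynomial (Fin n) K) : Fin n →₀ ℕ :=
  if h : ∃ μ, μ ∈ p.support ∧ ∀ ν ∈ p.support, O.rle ν μ then h.choose else 0

/-- the lead coefficient of `p` -/
noncomputable def leadCoeff (O : SigOrder n m) (p : MvPolynomial (Fin n) K) : K :=
  p.coeff (leadMon O p)

/-- the lead term `lt(p)` (a term, i.e. monomial together with its coefficient) -/
noncomputable def leadTerm (O : SigOrder n m) (p : MvPolynomial (Fin n) K) :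
    MvPolynomial (Fin n) K :=
  monomial (leadMon O p) (leadCoeff O p)

/-- `lt(p) ≃ lt(q)`: the lead terms agree up to a nonzero scalar -/
def LeadTermAssoc (O : SigOrder n m) (p q : MvPolynomial (Fin n) K) : Prop :=
  p ≠ 0 ∧ q ≠ 0 ∧ leadMon O p = leadMon O q

open Classical in
/-- the module monomial of the signature `σ(α)`: the `≤`-maximal module monomial
occurring in `α` (junk value for `α = 0`) -/
noncomputable def sigMon [NeZero m] (O : SigOrder n m)
    (α : Fin m → MvPolynomial (Fin n) K) : (Fin n →₀ ℕ) × Fin m :=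
  if h : ∃ S : (Fin n →₀ ℕ) × Fin m, (α S.2).coeff S.1 ≠ 0 ∧
      ∀ T : (Fin n →₀ ℕ) × Fin m, (α T.2).coeff T.1 ≠ 0 → O.mle T S
  then h.choose
  else (0, ⟨0, Nat.pos_of_ne_zero (NeZero.ne m)⟩)

/-- the coefficient of the signature term of `α` -/
noncomputable def sigCoeff [NeZero m] (O : SigOrder n m)
    (α : Fin m → MvPolynomial (Fin n) K) : K :=
  (α (sigMon O α).2).coeff (sigMon O α).1

/-- `b` is a (not necessarily monic) monomial of `R` -/
def IsMonomial (b : MvPolynomial (Fin n) K) : Prop :=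
  ∃ (ν : Fin n →₀ ℕ) (c : K), c ≠ 0 ∧ b = monomial ν c

/-- `b·β` s-reduces the term of `π(α)` at the monomial `μ`:
`b` is a monomial, `μ` is a term of `π(α)`, `lt(b·π(β))` equals that term, and
`σ(b·β) ≤ σ(α)`. -/
def SRed [NeZero m] (O : SigOrder n m) (f α β : Fin m → MvPolynomial (Fin n) K)
    (b : MvPolynomial (Fin n) K) (μ : Fin n →₀ ℕ) : Prop :=
  IsMonomial b ∧ (proj f α).coeff μ ≠ 0 ∧
  leadTerm O (b * proj f β) = monomial μ ((proj f α).coeff μ) ∧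
  O.mle (sigMon O (b • β)) (sigMon O α)

/-- a regular s-reduction: additionally `σ(b·β) ≠ σ(α)` (as module monomials) -/
def RegSRed [NeZero m] (O : SigOrder n m) (f α β : Fin m → MvPolynomial (Fin n) K)
    (b : MvPolynomial (Fin n) K) (μ : Fin n →₀ ℕ) : Prop :=
  SRed O f α β b μ ∧ sigMon O (b • β) ≠ sigMon O α

/-- one s-reduction step w.r.t. `G` -/
def Step [NeZero m] (O : SigOrder n m) (f : Fin m → MvPolynomial (Fin n) K)
    (G : Set (Fin m → MvPolynomial (Fin n) K))
    (α γ : Fin m → MvPolynomial (Fin n) K) : Prop :=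
  ∃ β ∈ G, ∃ b μ, SRed O f α β b μ ∧ γ = α - b • β

/-- one regular s-reduction step w.r.t. `G` -/
def RegStep [NeZero m] (O : SigOrder n m) (f : Fin m → MvPolynomial (Fin n) K)
    (G : Set (Fin m → MvPolynomial (Fin n) K))
    (α γ : Fin m → MvPolynomial (Fin n) K) : Prop :=
  ∃ β ∈ G, ∃ b μ, RegSRed O f α β b μ ∧ γ = α - b • β

/-- `α` s-reduces to zero w.r.t. `G`: some sequence of s-reduction steps turns it
into a syzygy -/
def SReducesToZero [NeZero m] (O : SigOrder n m) (f : Fin m → MvPolynomial (Fin n) K)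
    (G : Set (Fin m → MvPolynomial (Fin n) K))
    (α : Fin m → MvPolynomial (Fin n) K) : Prop :=
  ∃ γ, Relation.ReflTransGen (Step O f G) α γ ∧ proj f γ = 0

/-- `α` regular s-reduces to zero w.r.t. `G` -/
def RegSReducesToZero [NeZero m] (O : SigOrder n m) (f : Fin m → MvPolynomial (Fin n) K)
    (G : Set (Fin m → MvPolynomial (Fin n) K))
    (α : Fin m → MvPolynomial (Fin n) K) : Prop :=
  ∃ γ, Relation.ReflTransGen (RegStep O f G) α γ ∧ proj f γ = 0

/-- `G` is a signature Gröbner basis in signature `T` -/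
def IsSigGBIn [NeZero m] (O : SigOrder n m) (f : Fin m → MvPolynomial (Fin n) K)
    (G : Set (Fin m → MvPolynomial (Fin n) K)) (T : (Fin n →₀ ℕ) × Fin m) : Prop :=
  ∀ α : Fin m → MvPolynomial (Fin n) K, α ≠ 0 → sigMon O α = T → SReducesToZero O f G α

/-- `G` is a signature Gröbner basis up to signature `T` -/
def IsSigGBUpTo [NeZero m] (O : SigOrder n m) (f : Fin m → MvPolynomial (Fin n) K)
    (G : Set (Fin m → MvPolynomial (Fin n) K)) (T : (Fin n →₀ ℕ) × Fin m) : Prop :=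
  ∀ S, O.mlt S T → IsSigGBIn O f G S

/-- `G` is a signature Gröbner basis -/
def IsSigGB [NeZero m] (O : SigOrder n m) (f : Fin m → MvPolynomial (Fin n) K)
    (G : Set (Fin m → MvPolynomial (Fin n) K)) : Prop :=
  ∀ T, IsSigGBIn O f G T

/-- the monic least common multiple of two monomials (componentwise max) -/
noncomputable def monLcm (μ ν : Fin n →₀ ℕ) : Fin n →₀ ℕ :=
  Finsupp.zipWith max (max_self 0) μ ν

/-- the S-pair `spair(α,β) = (λ/lt(π α))·α − (λ/lt(π β))·β` -/
noncomputable def spair (O : SigOrder n m) (f α β : Fin m → MvPolynomial (Fin n) K) :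
    Fin m → MvPolynomial (Fin n) K :=
  (monomial (monLcm (leadMon O (proj f α)) (leadMon O (proj f β)) - leadMon O (proj f α))
      (leadCoeff O (proj f α))⁻¹ : MvPolynomial (Fin n) K) • α -
  (monomial (monLcm (leadMon O (proj f α)) (leadMon O (proj f β)) - leadMon O (proj f β))
      (leadCoeff O (proj f β))⁻¹ : MvPolynomial (Fin n) K) • β

/-- `spair(α,β)` is a regular S-pair: `π α ≠ 0 ≠ π β` and the signatures of the two
halves differ -/
def IsRegularSPair [NeZero m] (O : SigOrder n m)
    (f α β : Fin m → MvPolynomial (Fin n) K) : Prop :=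
  proj f α ≠ 0 ∧ proj f β ≠ 0 ∧
  sigMon O ((monomial (monLcm (leadMon O (proj f α)) (leadMon O (proj f β)) -
      leadMon O (proj f α)) (leadCoeff O (proj f α))⁻¹ : MvPolynomial (Fin n) K) • α) ≠
  sigMon O ((monomial (monLcm (leadMon O (proj f α)) (leadMon O (proj f β)) -
      leadMon O (proj f β)) (leadCoeff O (proj f β))⁻¹ : MvPolynomial (Fin n) K) • β)

/-- the signature `T` is predictably syzygy: some syzygy `s` has `σ(s) < T` and
`σ(s) ∣ T` -/
def PredictablySyzygy [NeZero m] (O : SigOrder n m) (f : Fin m → MvPolynomial (Fin n) K)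
    (T : (Fin n →₀ ℕ) × Fin m) : Prop :=
  ∃ s : Fin m → MvPolynomial (Fin n) K, s ≠ 0 ∧ proj f s = 0 ∧
    O.mlt (sigMon O s) T ∧ mmDvd (sigMon O s) T

/-- a rewrite order on `G ∪ H`: a partial order that is total on `G` -/
def IsRewriteOrder (G H : Set (Fin m → MvPolynomial (Fin n) K))
    (rew : (Fin m → MvPolynomial (Fin n) K) → (Fin m → MvPolynomial (Fin n) K) → Prop) :
    Prop :=
  (∀ α ∈ G ∪ H, rew α α) ∧
  (∀ α β γ : Fin m → MvPolynomial (Fin n) K, rew α β → rew β γ → rew α γ) ∧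
  (∀ α β : Fin m → MvPolynomial (Fin n) K, rew α β → rew β α → α = β) ∧
  (∀ α ∈ G, ∀ β ∈ G, rew α β ∨ rew β α)

/-- `β` admits a rewriter in signature `T`, i.e. some monomial multiple of `β` has
signature `T` -/
def IsRewriterIn [NeZero m] (O : SigOrder n m) (β : Fin m → MvPolynomial (Fin n) K)
    (T : (Fin n →₀ ℕ) × Fin m) : Prop :=
  ∃ a : Fin n →₀ ℕ, sigMon O ((monomial a (1 : K) : MvPolynomial (Fin n) K) • β) = T

/-- `x^a·α` is the canonical rewriter in signature `T` w.r.t. `rew`: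
`α ∈ G ∪ H`, `σ(x^a·α) = T`, and `α` is `rew`-maximal among elements of `G ∪ H`
admitting a rewriter in `T` -/
def IsCanonicalRewriter [NeZero m] (O : SigOrder n m)
    (G H : Set (Fin m → MvPolynomial (Fin n) K))
    (rew : (Fin m → MvPolynomial (Fin n) K) → (Fin m → MvPolynomial (Fin n) K) → Prop)
    (α : Fin m → MvPolynomial (Fin n) K) (a : Fin n →₀ ℕ)
    (T : (Fin n →₀ ℕ) × Fin m) : Prop :=
  α ∈ G ∪ H ∧ sigMon O ((monomial a (1 : K) : MvPolynomial (Fin n) K) • α) = T ∧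
  ∀ β ∈ G ∪ H, IsRewriterIn O β T → rew β α

/-- `γ` is regular top s-reducible w.r.t. `G` -/
def RegTopSReducible [NeZero m] (O : SigOrder n m) (f : Fin m → MvPolynomial (Fin n) K)
    (G : Set (Fin m → MvPolynomial (Fin n) K))
    (γ : Fin m → MvPolynomial (Fin n) K) : Prop :=
  ∃ β ∈ G, ∃ b, RegSRed O f γ β b (leadMon O (proj f γ))

/-- `G` is a rewrite basis in signature `T`: the canonical rewriter in `T` is not
regular top s-reducible w.r.t. `G` -/
def IsRewriteBasisIn [NeZero m] (O : SigOrder n m) (f : Fin m → MvPolynomial (Fin n) K)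
    (G H : Set (Fin m → MvPolynomial (Fin n) K))
    (rew : (Fin m → MvPolynomial (Fin n) K) → (Fin m → MvPolynomial (Fin n) K) → Prop)
    (T : (Fin n →₀ ℕ) × Fin m) : Prop :=
  ∀ (α : Fin m → MvPolynomial (Fin n) K) (a : Fin n →₀ ℕ),
    IsCanonicalRewriter O G H rew α a T →
    ¬ RegTopSReducible O f G ((monomial a (1 : K) : MvPolynomial (Fin n) K) • α)

/-- `G` is a rewrite basis up to signature `T` -/
def IsRewriteBasisUpTo [NeZero m] (O : SigOrder n m) (f : Fin m → MvPolynomial (Fin n) K)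
    (G H : Set (Fin m → MvPolynomial (Fin n) K))
    (rew : (Fin m → MvPolynomial (Fin n) K) → (Fin m → MvPolynomial (Fin n) K) → Prop)
    (T : (Fin n →₀ ℕ) × Fin m) : Prop :=
  ∀ S, O.mlt S T → IsRewriteBasisIn O f G H rew S

/-- one ordinary polynomial reduction step w.r.t. a set `G` of polynomials -/
def PolyRedStep (O : SigOrder n m) (G : Set (MvPolynomial (Fin n) K))
    (p q : MvPolynomial (Fin n) K) : Prop :=
  ∃ g ∈ G, ∃ (b : MvPolynomial (Fin n) K) (μ : Fin n →₀ ℕ),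
    IsMonomial b ∧ p.coeff μ ≠ 0 ∧
    leadTerm O (b * g) = monomial μ (p.coeff μ) ∧ q = p - b * g

/-- `p` reduces to zero w.r.t. `G` under ordinary polynomial reduction -/
def PolyReducesToZero (O : SigOrder n m) (G : Set (MvPolynomial (Fin n) K))
    (p : MvPolynomial (Fin n) K) : Prop :=
  Relation.ReflTransGen (PolyRedStep O G) p 0

/-- `G` is a Gröbner basis for the ideal `I` -/
def IsGroebnerBasis (O : SigOrder n m) (G : Set (MvPolynomial (Fin n) K))
    (I : Ideal (MvPolynomial (Fin n) K)) : Prop :=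
  G ⊆ ↑I ∧ ∀ p ∈ I, PolyReducesToZero O G p

/-- If `𝒢` is a signature Gröbner basis for `I = ⟨f₁,…,f_m⟩`, then
`{π α : α ∈ 𝒢, π α ≠ 0}` is a Gröbner basis for `I`. -/
theorem statement0 {K : Type*} [Field K] {n m : ℕ} [NeZero m]
    (O : SigOrder n m) (f : Fin m → MvPolynomial (Fin n) K)
    (G : Finset (Fin m → MvPolynomial (Fin n) K))
    (hG : IsSigGB O f ↑G) :
    IsGroebnerBasis O {p : MvPolynomial (Fin n) K | ∃ α ∈ G, proj f α = p ∧ p ≠ 0}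
      (Ideal.span (Set.range f)) := by

  constructor
  · rintro p ⟨α, hα, hp, hp0⟩
    rw [← hp]
    exact Ideal.mem_span_range_iff_exists_fun.mpr ⟨α, rfl⟩
  · intro p hp
    obtain ⟨a, ha⟩ := Ideal.mem_span_range_iff_exists_fun.mp hp
    by_cases hp0 : p = 0
    · subst hp0; exact Relation.ReflTransGen.refl
    have ha0 : a ≠ 0 := by
      rintro rfl
      simp [← ha] at hp0
    obtain ⟨γ, hchain, hγ⟩ := hG (sigMon O a) a ha0 rfl
    have key : ∀ x y : Fin m → MvPolynomial (Fin n) K,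
        Step O f (↑G) x y → PolyRedStep O
          {p : MvPolynomial (Fin n) K | ∃ α ∈ G, proj f α = p ∧ p ≠ 0}
          (proj f x) (proj f y) := by
      rintro x y ⟨β, hβ, b, μ, ⟨hbmon, hcoeff, hlt, hsig⟩, rfl⟩
      have hproj : proj f (x - b • β) = proj f x - b * proj f β := by
        simp only [proj, Pi.sub_apply, Pi.smul_apply, smul_eq_mul, sub_mul,
          Finset.sum_sub_distrib, Finset.mul_sum, mul_assoc]
      have hg0 : proj f β ≠ 0 := by
        rintro h
        rw [h, mul_zero] at hlt
        have : leadTerm O (0 : MvPolynomial (Fin n) K) = 0 := by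
          simp [leadTerm, leadCoeff]
        rw [this] at hlt
        exact hcoeff ((MvPolynomial.monomial_eq_zero).mp hlt.symm)
      exact ⟨proj f β, ⟨β, hβ, rfl, hg0⟩, b, μ, hbmon, hcoeff, hlt, hproj⟩
    have hchain' : Relation.ReflTransGen (PolyRedStep O {p : MvPolynomial (Fin n) K | ∃ α ∈ G, proj f α = p ∧ p ≠ 0}) (proj f a) (proj f γ) := Relation.ReflTransGen.lift (proj f) key _ _ hchain
    have ha' : proj f a = p := ha
    rw [ha', hγ] at hchain'
    exact hchain'


end SigGB
end

section
/- Let T be a module monomial of R^m and let 𝒢 ⊆ R^m be finite. Assume that every regular S-pair spair(α,β) with α, β ∈ 𝒢 and σ(spair(α,β)) < T s-reduces to zero w.r.t. 𝒢, and that every basis vector eᵢ with eᵢ < T s-reduces to zero w.r.t. 𝒢. Then 𝒢 is a signature Gröbner basis up to signature T. -/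
open MvPolynomial

namespace SigGB

variable {K : Type*} [Field K] {n m : ℕ}

/-! ### Auxiliary lemmas -/

section Aux

private theorem exists_max_rel {γ : Type*} (le : γ → γ → Prop)
    (htot : ∀ a b, le a b ∨ le b a) (htr : ∀ {a b c}, le a b → le b c → le a c)
    (s : Finset γ) (hs : s.Nonempty) : ∃ M ∈ s, ∀ x ∈ s, le x M := by
  classical
  induction s using Finset.induction_on with
  | empty => exact absurd hs (by simp)
  | @insert a t ha ih =>
    rcases t.eq_empty_or_nonempty with rfl | ht
    · refine ⟨a, Finset.mem_insert_self a _, ?_⟩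
      intro x hx
      rcases Finset.mem_insert.mp hx with rfl | hx
      · exact (htot x x).elim id id
      · exact absurd hx (by simp)
    · obtain ⟨M, hM, hmax⟩ := ih ht
      rcases htot a M with h | h
      · refine ⟨M, Finset.mem_insert_of_mem hM, ?_⟩
        intro x hx
        rcases Finset.mem_insert.mp hx with rfl | hx
        · exact h
        · exact hmax x hx
      · refine ⟨a, Finset.mem_insert_self a _, ?_⟩
        intro x hx
        rcases Finset.mem_insert.mp hx with rfl | hx
        · exact (htot x x).elim id id
        · exact htr (hmax x hx) h

variable {n m : ℕ}

theorem SigOrder.rle_zero (O : SigOrder n m) (a : Fin n →₀ ℕ) : O.rle 0 a := by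
  by_contra h
  have ha : O.rle a 0 := (O.rle_total 0 a).resolve_left h
  have hne : a ≠ 0 := fun e => h (e ▸ O.rle_refl 0)
  obtain ⟨x, ⟨k, rfl⟩, hmin⟩ := O.rle_wf.has_min (Set.range fun k : ℕ => (k + 1) • a)
    ⟨1 • a, ⟨0, rfl⟩⟩
  refine hmin ((k + 1 + 1) • a) ⟨k + 1, rfl⟩ ⟨?_, ?_⟩
  · have h1 : O.rle ((k + 1) • a + a) ((k + 1) • a + 0) := O.rle_add _ ha
    rw [add_zero] at h1
    rwa [succ_nsmul]
  · intro e
    rw [succ_nsmul] at e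
    have : (k + 1) • a + a = (k + 1) • a + 0 := by rw [add_zero]; exact e
    exact hne (add_left_cancel this)

theorem SigOrder.rle_of_add (O : SigOrder n m) {c a b : Fin n →₀ ℕ}
    (h : O.rle (c + a) (c + b)) : O.rle a b := by
  rcases O.rle_total a b with h' | h'
  · exact h'
  · have h2 := O.rle_antisymm h (O.rle_add c h')
    rw [add_left_cancel h2]
    exact O.rle_refl b

theorem SigOrder.rlt_add (O : SigOrder n m) (c : Fin n →₀ ℕ) {a b : Fin n →₀ ℕ}
    (h : O.rlt a b) : O.rlt (c + a) (c + b) :=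
  ⟨O.rle_add c h.1, fun e => h.2 (add_left_cancel e)⟩

theorem SigOrder.rlt_of_rlt_of_rle (O : SigOrder n m) {a b c : Fin n →₀ ℕ}
    (h1 : O.rlt a b) (h2 : O.rle b c) : O.rlt a c :=
  ⟨O.rle_trans h1.1 h2, fun e => h1.2 (O.rle_antisymm h1.1 (e ▸ h2))⟩

theorem SigOrder.mle_of_add (O : SigOrder n m) {c : Fin n →₀ ℕ}
    {S T : (Fin n →₀ ℕ) × Fin m} (h : O.mle (c + S.1, S.2) (c + T.1, T.2)) : O.mle S T := by
  rcases O.mle_total S T with h' | h'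
  · exact h'
  · have h2 := O.mle_antisymm h (O.mle_add c h')
    rw [Prod.mk.injEq] at h2
    have : S = T := Prod.ext (add_left_cancel h2.1) h2.2
    rw [this]
    exact O.mle_refl T

theorem SigOrder.mlt_of_add (O : SigOrder n m) {c : Fin n →₀ ℕ}
    {S T : (Fin n →₀ ℕ) × Fin m} (h : O.mlt (c + S.1, S.2) (c + T.1, T.2)) : O.mlt S T :=
  ⟨O.mle_of_add h.1, fun e => h.2 (by rw [e])⟩

theorem SigOrder.mle_add_self (O : SigOrder n m) (c : Fin n →₀ ℕ)
    (S : (Fin n →₀ ℕ) × Fin m) : O.mle S (c + S.1, S.2) := by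
  have h2 : O.rle S.1 (c + S.1) := by
    have h1 : O.rle (S.1 + 0) (S.1 + c) := O.rle_add S.1 (O.rle_zero c)
    rw [add_zero, add_comm] at h1
    exact h1
  exact (O.compat S.1 (c + S.1) S.2).mp h2

theorem SigOrder.mlt_of_mle_of_mlt (O : SigOrder n m) {A B C : (Fin n →₀ ℕ) × Fin m}
    (h1 : O.mle A B) (h2 : O.mlt B C) : O.mlt A C :=
  ⟨O.mle_trans h1 h2.1, fun e => h2.2 (O.mle_antisymm h2.1 (e ▸ h1))⟩

theorem SigOrder.mlt_of_mlt_of_mle (O : SigOrder n m) {A B C : (Fin n →₀ ℕ) × Fin m}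
    (h1 : O.mlt A B) (h2 : O.mle B C) : O.mlt A C :=
  ⟨O.mle_trans h1.1 h2, fun e => h1.2 (O.mle_antisymm h1.1 (e ▸ h2))⟩

variable {K : Type*} [Field K]

theorem monomial_inj' {m₁ m₂ : Fin n →₀ ℕ} {c₁ c₂ : K}
    (h : (monomial m₁ c₁ : MvPolynomial (Fin n) K) = monomial m₂ c₂) (hc₂ : c₂ ≠ 0) :
    m₁ = m₂ ∧ c₁ = c₂ := by
  classical
  have h2 := congrArg (MvPolynomial.coeff m₂) h
  rw [coeff_monomial, coeff_monomial, if_pos rfl] at h2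
  by_cases he : m₁ = m₂
  · subst he
    rw [if_pos rfl] at h2
    exact ⟨rfl, h2⟩
  · rw [if_neg he] at h2
    exact absurd h2.symm hc₂

theorem leadMon_spec (O : SigOrder n m) {p : MvPolynomial (Fin n) K} (hp : p ≠ 0) :
    p.coeff (leadMon O p) ≠ 0 ∧ ∀ ν, p.coeff ν ≠ 0 → O.rle ν (leadMon O p) := by
  have hex : ∃ μ, μ ∈ p.support ∧ ∀ ν ∈ p.support, O.rle ν μ := by
    obtain ⟨M, hM, hmax⟩ := exists_max_rel O.rle O.rle_total
      (fun h1 h2 => O.rle_trans h1 h2) p.support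
      (by rwa [MvPolynomial.support_nonempty])
    exact ⟨M, hM, hmax⟩
  rw [leadMon, dif_pos hex]
  obtain ⟨h1, h2⟩ := hex.choose_spec
  exact ⟨MvPolynomial.mem_support_iff.mp h1,
    fun ν hν => h2 ν (MvPolynomial.mem_support_iff.mpr hν)⟩

theorem leadMon_eq (O : SigOrder n m) {p : MvPolynomial (Fin n) K} {μ : Fin n →₀ ℕ}
    (h1 : p.coeff μ ≠ 0) (h2 : ∀ ν, p.coeff ν ≠ 0 → O.rle ν μ) : leadMon O p = μ := by
  have hp : p ≠ 0 := fun e => h1 (by simp [e])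
  obtain ⟨g1, g2⟩ := leadMon_spec O hp
  exact O.rle_antisymm (h2 _ g1) (g2 _ h1)

theorem coeff_eq_zero_of_rlt (O : SigOrder n m) {p : MvPolynomial (Fin n) K} {ν : Fin n →₀ ℕ}
    (h : O.rlt (leadMon O p) ν) : p.coeff ν = 0 := by
  by_contra hc
  have hp : p ≠ 0 := fun e => hc (by simp [e])
  exact h.2 (O.rle_antisymm h.1 ((leadMon_spec O hp).2 ν hc))

theorem leadMon_monomial_mul (O : SigOrder n m) {p : MvPolynomial (Fin n) K} (hp : p ≠ 0)
    {a : Fin n →₀ ℕ} {c : K} (hc : c ≠ 0) :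
    leadMon O ((monomial a c : MvPolynomial (Fin n) K) * p) = a + leadMon O p := by
  apply leadMon_eq O
  · rw [coeff_monomial_mul]
    exact mul_ne_zero hc (leadMon_spec O hp).1
  · intro ν hν
    rw [coeff_monomial_mul'] at hν
    split_ifs at hν with hle
    · have h2 : p.coeff (ν - a) ≠ 0 := right_ne_zero_of_mul hν
      have h3 := O.rle_add a ((leadMon_spec O hp).2 _ h2)
      rwa [add_tsub_cancel_of_le hle] at h3
    · exact absurd rfl hν

theorem leadTerm_monomial_mul (O : SigOrder n m) {p : MvPolynomial (Fin n) K} (hp : p ≠ 0)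
    {a : Fin n →₀ ℕ} {c : K} (hc : c ≠ 0) :
    leadTerm O ((monomial a c : MvPolynomial (Fin n) K) * p) =
      monomial (a + leadMon O p) (c * p.coeff (leadMon O p)) := by
  rw [leadTerm, leadCoeff, leadMon_monomial_mul O hp hc, coeff_monomial_mul]

theorem of_leadTerm_eq (O : SigOrder n m) {q : MvPolynomial (Fin n) K} {μ : Fin n →₀ ℕ}
    {c : K} (hc : c ≠ 0) (h : leadTerm O q = monomial μ c) :
    q ≠ 0 ∧ leadMon O q = μ ∧ q.coeff μ = c := by
  have hq : q ≠ 0 := by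
    rintro rfl
    rw [leadTerm, leadCoeff] at h
    simp only [MvPolynomial.coeff_zero, map_zero] at h
    exact hc (MvPolynomial.monomial_eq_zero.mp h.symm)
  rw [leadTerm, leadCoeff] at h
  obtain ⟨e1, e2⟩ := monomial_inj' h hc
  exact ⟨hq, e1, by rw [← e1]; exact e2⟩

end Aux

section Aux2

variable {K : Type*} [Field K] {n m : ℕ}

/-- auxiliary: the set of module monomials occurring in `α` -/
private def msupp (α : Fin m → MvPolynomial (Fin n) K) : Finset ((Fin n →₀ ℕ) × Fin m) :=
  Finset.univ.biUnion fun j => (α j).support.image fun μ => (μ, j)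

private theorem mem_msupp {α : Fin m → MvPolynomial (Fin n) K} {U : (Fin n →₀ ℕ) × Fin m} :
    U ∈ msupp α ↔ (α U.2).coeff U.1 ≠ 0 := by
  classical
  simp only [msupp, Finset.mem_biUnion, Finset.mem_univ, true_and, Finset.mem_image,
    MvPolynomial.mem_support_iff]
  constructor
  · rintro ⟨j, μ, hμ, rfl⟩
    exact hμ
  · intro h
    exact ⟨U.2, U.1, h, rfl⟩

theorem sigMon_spec [NeZero m] (O : SigOrder n m) {α : Fin m → MvPolynomial (Fin n) K}
    (hα : α ≠ 0) :
    (α (sigMon O α).2).coeff (sigMon O α).1 ≠ 0 ∧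
      ∀ U : (Fin n →₀ ℕ) × Fin m, (α U.2).coeff U.1 ≠ 0 → O.mle U (sigMon O α) := by
  have hne : (msupp α).Nonempty := by
    obtain ⟨j, hj⟩ := Function.ne_iff.mp hα
    obtain ⟨μ, hμ⟩ := MvPolynomial.ne_zero_iff.mp hj
    exact ⟨(μ, j), mem_msupp.mpr hμ⟩
  have hex : ∃ S : (Fin n →₀ ℕ) × Fin m, (α S.2).coeff S.1 ≠ 0 ∧
      ∀ T : (Fin n →₀ ℕ) × Fin m, (α T.2).coeff T.1 ≠ 0 → O.mle T S := by
    obtain ⟨M, hM, hmax⟩ := exists_max_rel O.mle O.mle_total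
      (fun h1 h2 => O.mle_trans h1 h2) (msupp α) hne
    exact ⟨M, mem_msupp.mp hM, fun U hU => hmax U (mem_msupp.mpr hU)⟩
  rw [sigMon, dif_pos hex]
  exact hex.choose_spec

theorem sigMon_eq [NeZero m] (O : SigOrder n m) {α : Fin m → MvPolynomial (Fin n) K}
    {V : (Fin n →₀ ℕ) × Fin m} (h1 : (α V.2).coeff V.1 ≠ 0)
    (h2 : ∀ U : (Fin n →₀ ℕ) × Fin m, (α U.2).coeff U.1 ≠ 0 → O.mle U V) :
    sigMon O α = V := by
  have hα : α ≠ 0 := by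
    rintro rfl
    exact h1 (by simp)
  obtain ⟨g1, g2⟩ := sigMon_spec O hα
  exact O.mle_antisymm (h2 _ g1) (g2 _ h1)

theorem vcoeff_eq_zero_of_sig_mlt [NeZero m] (O : SigOrder n m)
    {α : Fin m → MvPolynomial (Fin n) K} {U : (Fin n →₀ ℕ) × Fin m}
    (h : O.mlt (sigMon O α) U) : (α U.2).coeff U.1 = 0 := by
  by_contra hc
  have hα : α ≠ 0 := by
    rintro rfl
    exact hc (by simp)
  exact h.2 (O.mle_antisymm h.1 ((sigMon_spec O hα).2 U hc))

theorem sigMon_monomial_smul [NeZero m] (O : SigOrder n m)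
    {α : Fin m → MvPolynomial (Fin n) K} (hα : α ≠ 0) {a : Fin n →₀ ℕ} {c : K} (hc : c ≠ 0) :
    sigMon O ((monomial a c : MvPolynomial (Fin n) K) • α) =
      (a + (sigMon O α).1, (sigMon O α).2) := by
  apply sigMon_eq O
  · show (((monomial a c : MvPolynomial (Fin n) K) • α) (sigMon O α).2).coeff
      (a + (sigMon O α).1) ≠ 0
    rw [Pi.smul_apply, smul_eq_mul, coeff_monomial_mul]
    exact mul_ne_zero hc (sigMon_spec O hα).1
  · intro U hU
    rw [Pi.smul_apply, smul_eq_mul, coeff_monomial_mul'] at hU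
    split_ifs at hU with hle
    · have h2 : (α U.2).coeff (U.1 - a) ≠ 0 := right_ne_zero_of_mul hU
      have h3 := O.mle_add a ((sigMon_spec O hα).2 (U.1 - a, U.2) h2)
      rwa [add_tsub_cancel_of_le hle] at h3
    · exact absurd rfl hU

theorem sigCoeff_monomial_smul [NeZero m] (O : SigOrder n m)
    {α : Fin m → MvPolynomial (Fin n) K} (hα : α ≠ 0) {a : Fin n →₀ ℕ} {c : K} (hc : c ≠ 0) :
    sigCoeff O ((monomial a c : MvPolynomial (Fin n) K) • α) = c * sigCoeff O α := by
  rw [sigCoeff, sigMon_monomial_smul O hα hc, Pi.smul_apply, smul_eq_mul]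
  exact coeff_monomial_mul _ _ _ _

private theorem sub_coeff_cases {x y : Fin m → MvPolynomial (Fin n) K}
    {U : (Fin n →₀ ℕ) × Fin m} (h : ((x - y) U.2).coeff U.1 ≠ 0) :
    (x U.2).coeff U.1 ≠ 0 ∨ (y U.2).coeff U.1 ≠ 0 := by
  by_contra hc
  push_neg at hc
  exact h (by rw [Pi.sub_apply, MvPolynomial.coeff_sub, hc.1, hc.2, sub_zero])

private theorem add_coeff_cases {x y : Fin m → MvPolynomial (Fin n) K}
    {U : (Fin n →₀ ℕ) × Fin m} (h : ((x + y) U.2).coeff U.1 ≠ 0) :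
    (x U.2).coeff U.1 ≠ 0 ∨ (y U.2).coeff U.1 ≠ 0 := by
  by_contra hc
  push_neg at hc
  exact h (by rw [Pi.add_apply, MvPolynomial.coeff_add, hc.1, hc.2, add_zero])

theorem sigMon_sub [NeZero m] (O : SigOrder n m) {u v : Fin m → MvPolynomial (Fin n) K}
    (hu : u ≠ 0) (hv : v ≠ 0) (h : O.mlt (sigMon O v) (sigMon O u)) :
    sigMon O (u - v) = sigMon O u ∧
      ((u - v) (sigMon O u).2).coeff (sigMon O u).1 = sigCoeff O u ∧ u - v ≠ 0 := by
  have hcoeff : ((u - v) (sigMon O u).2).coeff (sigMon O u).1 = sigCoeff O u := by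
    rw [Pi.sub_apply, MvPolynomial.coeff_sub, vcoeff_eq_zero_of_sig_mlt O h, sub_zero]
    rfl
  have hne : ((u - v) (sigMon O u).2).coeff (sigMon O u).1 ≠ 0 := by
    rw [hcoeff]
    exact (sigMon_spec O hu).1
  refine ⟨sigMon_eq O hne ?_, hcoeff, ?_⟩
  · intro U hU
    rcases sub_coeff_cases hU with h1 | h1
    · exact (sigMon_spec O hu).2 U h1
    · exact O.mle_trans ((sigMon_spec O hv).2 U h1) h.1
  · intro hz
    rw [hz] at hne
    exact hne (by simp)

theorem sigMon_single_one [NeZero m] (O : SigOrder n m) (i : Fin m) :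
    sigMon O (Pi.single i (1 : MvPolynomial (Fin n) K)) = ((0 : Fin n →₀ ℕ), i) ∧
      sigCoeff O (Pi.single i (1 : MvPolynomial (Fin n) K)) = 1 ∧
      (Pi.single i (1 : MvPolynomial (Fin n) K) : Fin m → MvPolynomial (Fin n) K) ≠ 0 := by
  classical
  have h1 : ((Pi.single i (1 : MvPolynomial (Fin n) K) : Fin m → MvPolynomial (Fin n) K) i).coeff
      (0 : Fin n →₀ ℕ) = 1 := by
    rw [Pi.single_eq_same, MvPolynomial.coeff_one, if_pos rfl]
  have hσ : sigMon O (Pi.single i (1 : MvPolynomial (Fin n) K)) = ((0 : Fin n →₀ ℕ), i) := by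
    apply sigMon_eq O
    · show ((Pi.single i (1 : MvPolynomial (Fin n) K) : Fin m → MvPolynomial (Fin n) K) i).coeff
        (0 : Fin n →₀ ℕ) ≠ 0
      rw [h1]
      exact one_ne_zero
    · intro U hU
      rw [Pi.single_apply] at hU
      by_cases he : U.2 = i
      · rw [if_pos he, MvPolynomial.coeff_one] at hU
        have h0 : (0 : Fin n →₀ ℕ) = U.1 := by
          by_contra hne
          rw [if_neg hne] at hU
          exact hU rfl
        have : U = ((0 : Fin n →₀ ℕ), i) := Prod.ext h0.symm he
        rw [this]
        exact O.mle_refl _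
      · rw [if_neg he] at hU
        exact absurd (MvPolynomial.coeff_zero _) hU
  refine ⟨hσ, ?_, ?_⟩
  · rw [sigCoeff, hσ]
    exact h1
  · intro e
    have := congrFun e i
    rw [Pi.single_eq_same, Pi.zero_apply] at this
    exact one_ne_zero this

theorem proj_zero (f : Fin m → MvPolynomial (Fin n) K) :
    proj f (0 : Fin m → MvPolynomial (Fin n) K) = 0 := by
  simp [proj]

theorem proj_sub (f α β : Fin m → MvPolynomial (Fin n) K) :
    proj f (α - β) = proj f α - proj f β := by
  simp [proj, sub_mul, Finset.sum_sub_distrib]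

theorem proj_add (f α β : Fin m → MvPolynomial (Fin n) K) :
    proj f (α + β) = proj f α + proj f β := by
  simp [proj, add_mul, Finset.sum_add_distrib]

theorem proj_smul (f : Fin m → MvPolynomial (Fin n) K) (b : MvPolynomial (Fin n) K)
    (α : Fin m → MvPolynomial (Fin n) K) : proj f (b • α) = b * proj f α := by
  simp [proj, Finset.mul_sum, smul_eq_mul, mul_assoc]

theorem smul_pi_ne_zero [NeZero m] {α : Fin m → MvPolynomial (Fin n) K} (hα : α ≠ 0)
    {a : Fin n →₀ ℕ} {c : K} (hc : c ≠ 0) :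
    (monomial a c : MvPolynomial (Fin n) K) • α ≠ 0 := by
  obtain ⟨j, hj⟩ := Function.ne_iff.mp hα
  refine Function.ne_iff.mpr ⟨j, ?_⟩
  rw [Pi.smul_apply, smul_eq_mul, Pi.zero_apply]
  exact mul_ne_zero (fun e => hc (MvPolynomial.monomial_eq_zero.mp e)) hj

theorem le_monLcm_left (μ ν : Fin n →₀ ℕ) : μ ≤ monLcm μ ν := by
  rw [Finsupp.le_def]
  intro x
  rw [monLcm, Finsupp.zipWith_apply]
  exact le_max_left _ _

theorem le_monLcm_right (μ ν : Fin n →₀ ℕ) : ν ≤ monLcm μ ν := by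
  rw [Finsupp.le_def]
  intro x
  rw [monLcm, Finsupp.zipWith_apply]
  exact le_max_right _ _

theorem monLcm_le {μ ν ξ : Fin n →₀ ℕ} (h1 : μ ≤ ξ) (h2 : ν ≤ ξ) : monLcm μ ν ≤ ξ := by
  rw [Finsupp.le_def] at h1 h2 ⊢
  intro x
  rw [monLcm, Finsupp.zipWith_apply]
  exact max_le (h1 x) (h2 x)

end Aux2

section Aux3

variable {K : Type*} [Field K] {n m : ℕ} [NeZero m]

theorem step_smul (O : SigOrder n m) (f : Fin m → MvPolynomial (Fin n) K)
    (G : Set (Fin m → MvPolynomial (Fin n) K)) {a : Fin n →₀ ℕ} {c : K} (hc : c ≠ 0)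
    {α' γ' : Fin m → MvPolynomial (Fin n) K} (h : Step O f G α' γ') :
    Step O f G ((monomial a c : MvPolynomial (Fin n) K) • α')
      ((monomial a c : MvPolynomial (Fin n) K) • γ') := by
  obtain ⟨β, hβ, b, μ, ⟨⟨b₀, c₀, hc₀, rfl⟩, hcf, hlt, hσ⟩, rfl⟩ := h
  have hq := of_leadTerm_eq O hcf hlt
  have hπβ : proj f β ≠ 0 := fun e => hq.1 (by rw [e, mul_zero])
  have hβne : β ≠ 0 := fun e => hπβ (by rw [e, proj_zero])
  have hα'ne : α' ≠ 0 := fun e => hcf (by rw [e, proj_zero, MvPolynomial.coeff_zero])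
  refine ⟨β, hβ, monomial (a + b₀) (c * c₀), a + μ,
    ⟨⟨_, _, mul_ne_zero hc hc₀, rfl⟩, ?_, ?_, ?_⟩, ?_⟩
  · rw [proj_smul, coeff_monomial_mul]
    exact mul_ne_zero hc hcf
  · have hassoc : (monomial (a + b₀) (c * c₀) : MvPolynomial (Fin n) K) * proj f β
        = monomial a c * ((monomial b₀ c₀ : MvPolynomial (Fin n) K) * proj f β) := by
      rw [← mul_assoc, monomial_mul]
    rw [hassoc, leadTerm_monomial_mul O hq.1 hc, hq.2.1, hq.2.2, proj_smul,
      coeff_monomial_mul]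
  · have h1 : sigMon O ((monomial (a + b₀) (c * c₀) : MvPolynomial (Fin n) K) • β)
        = ((a + b₀) + (sigMon O β).1, (sigMon O β).2) :=
      sigMon_monomial_smul O hβne (mul_ne_zero hc hc₀)
    have h2 : sigMon O ((monomial b₀ c₀ : MvPolynomial (Fin n) K) • β)
        = (b₀ + (sigMon O β).1, (sigMon O β).2) := sigMon_monomial_smul O hβne hc₀
    have h3 : sigMon O ((monomial a c : MvPolynomial (Fin n) K) • α')
        = (a + (sigMon O α').1, (sigMon O α').2) := sigMon_monomial_smul O hα'ne hc
    rw [h1, h3, add_assoc]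
    rw [h2] at hσ
    exact O.mle_add a hσ
  · rw [smul_sub, smul_smul, monomial_mul]

theorem chain_smul (O : SigOrder n m) (f : Fin m → MvPolynomial (Fin n) K)
    (G : Set (Fin m → MvPolynomial (Fin n) K)) {a : Fin n →₀ ℕ} {c : K} (hc : c ≠ 0)
    {α' τ : Fin m → MvPolynomial (Fin n) K}
    (h : Relation.ReflTransGen (Step O f G) α' τ) :
    Relation.ReflTransGen (Step O f G) ((monomial a c : MvPolynomial (Fin n) K) • α')
      ((monomial a c : MvPolynomial (Fin n) K) • τ) :=
  Relation.ReflTransGen.lift _ (fun _ _ hxy => step_smul O f G hc hxy) _ _ h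

theorem add_syzygy_chain (O : SigOrder n m) (f : Fin m → MvPolynomial (Fin n) K)
    (G : Set (Fin m → MvPolynomial (Fin n) K)) {ρ δ τ : Fin m → MvPolynomial (Fin n) K}
    {S : (Fin n →₀ ℕ) × Fin m} (hπρ : proj f ρ = 0)
    (hρS : (ρ S.2).coeff S.1 ≠ 0)
    (hρbound : ∀ U : (Fin n →₀ ℕ) × Fin m, (ρ U.2).coeff U.1 ≠ 0 → O.mle U S)
    (hch : Relation.ReflTransGen (Step O f G) δ τ)
    (hsmall : ∀ U : (Fin n →₀ ℕ) × Fin m, (δ U.2).coeff U.1 ≠ 0 → O.mlt U S) :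
    Relation.ReflTransGen (Step O f G) (δ + ρ) (τ + ρ) := by
  revert hsmall
  induction hch using Relation.ReflTransGen.head_induction_on with
  | refl => exact fun _ => Relation.ReflTransGen.refl
  | @head δ' δ'' hstep htail IH =>
    intro hsmall
    obtain ⟨β, hβ, b, μ, hsr, heq⟩ := hstep
    obtain ⟨hmon, hcf, hlt, hσ⟩ := hsr
    have hq := of_leadTerm_eq O hcf hlt
    have hbβne : b • β ≠ 0 := by
      intro e
      apply hq.1
      have : proj f (b • β) = 0 := by rw [e, proj_zero]
      rwa [proj_smul] at this
    have hπδ'ne : proj f δ' ≠ 0 := fun e => hcf (by rw [e, MvPolynomial.coeff_zero])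
    have hδ'ne : δ' ≠ 0 := fun e => hπδ'ne (by rw [e, proj_zero])
    have hδ'mlt : O.mlt (sigMon O δ') S := hsmall _ (sigMon_spec O hδ'ne).1
    have hπsum : proj f (δ' + ρ) = proj f δ' := by rw [proj_add, hπρ, add_zero]
    have hδ'S : (δ' S.2).coeff S.1 = 0 := by
      by_contra hcS
      exact (hsmall S hcS).2 rfl
    have hσsum : sigMon O (δ' + ρ) = S := by
      apply sigMon_eq O
      · show ((δ' + ρ) S.2).coeff S.1 ≠ 0
        rw [Pi.add_apply, MvPolynomial.coeff_add, hδ'S, zero_add]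
        exact hρS
      · intro U hU
        rcases add_coeff_cases hU with h1 | h1
        · exact (hsmall U h1).1
        · exact hρbound U h1
    have hstep2 : Step O f G (δ' + ρ) (δ'' + ρ) := by
      refine ⟨β, hβ, b, μ, ⟨hmon, ?_, ?_, ?_⟩, ?_⟩
      · rw [hπsum]
        exact hcf
      · rw [hπsum]
        exact hlt
      · rw [hσsum]
        exact O.mle_trans hσ hδ'mlt.1
      · rw [heq, add_sub_right_comm]
    refine Relation.ReflTransGen.head hstep2 (IH ?_)
    intro U hU
    rw [heq] at hU
    rcases sub_coeff_cases hU with h1 | h1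
    · exact hsmall U h1
    · have h2 : O.mle U (sigMon O (b • β)) := (sigMon_spec O hbβne).2 U h1
      exact O.mlt_of_mle_of_mlt (O.mle_trans h2 hσ) hδ'mlt

theorem topfind (O : SigOrder n m) (f : Fin m → MvPolynomial (Fin n) K)
    (G : Set (Fin m → MvPolynomial (Fin n) K)) {ρ τ : Fin m → MvPolynomial (Fin n) K}
    (hch : Relation.ReflTransGen (Step O f G) ρ τ) (hτ : proj f τ = 0)
    (hπρ : proj f ρ ≠ 0) :
    ∃ β ∈ G, ∃ (b₀ : Fin n →₀ ℕ) (c₀ : K), c₀ ≠ 0 ∧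
      (monomial b₀ c₀ : MvPolynomial (Fin n) K) * proj f β ≠ 0 ∧
      leadMon O ((monomial b₀ c₀ : MvPolynomial (Fin n) K) * proj f β) =
        leadMon O (proj f ρ) ∧
      O.mle (sigMon O ((monomial b₀ c₀ : MvPolynomial (Fin n) K) • β)) (sigMon O ρ) := by
  suffices aux : ∀ δ : Fin m → MvPolynomial (Fin n) K,
      Relation.ReflTransGen (Step O f G) δ τ →
      (proj f δ).coeff (leadMon O (proj f ρ)) ≠ 0 →
      (∀ μ', (proj f δ).coeff μ' ≠ 0 → O.rle μ' (leadMon O (proj f ρ))) →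
      O.mle (sigMon O δ) (sigMon O ρ) →
      ∃ β ∈ G, ∃ (b₀ : Fin n →₀ ℕ) (c₀ : K), c₀ ≠ 0 ∧
        (monomial b₀ c₀ : MvPolynomial (Fin n) K) * proj f β ≠ 0 ∧
        leadMon O ((monomial b₀ c₀ : MvPolynomial (Fin n) K) * proj f β) =
          leadMon O (proj f ρ) ∧
        O.mle (sigMon O ((monomial b₀ c₀ : MvPolynomial (Fin n) K) • β)) (sigMon O ρ) by
    exact aux ρ hch (leadMon_spec O hπρ).1 (leadMon_spec O hπρ).2 (O.mle_refl _)
  intro δ hchδ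
  induction hchδ using Relation.ReflTransGen.head_induction_on with
  | refl =>
    intro h1 _ _
    exact absurd (by rw [hτ, MvPolynomial.coeff_zero]) h1
  | @head δ' δ'' hstep htail IH =>
    intro h1 h2 h3
    obtain ⟨β, hβ, b, μ, ⟨⟨b₀, c₀, hc₀, rfl⟩, hcf, hlt, hσ⟩, heq⟩ := hstep
    have hq := of_leadTerm_eq O hcf hlt
    have hμν : O.rle μ (leadMon O (proj f ρ)) := h2 μ hcf
    have hπδ'' : proj f δ'' = proj f δ' - (monomial b₀ c₀ : MvPolynomial (Fin n) K) * proj f β := by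
      rw [heq, proj_sub, proj_smul]
    by_cases hz : (proj f δ'').coeff (leadMon O (proj f ρ)) = 0
    · have hcq : ((monomial b₀ c₀ : MvPolynomial (Fin n) K) * proj f β).coeff
          (leadMon O (proj f ρ)) ≠ 0 := by
        rw [hπδ'', MvPolynomial.coeff_sub] at hz
        intro h
        rw [h, sub_zero] at hz
        exact h1 hz
      have hνμ : O.rle (leadMon O (proj f ρ)) μ := by
        have := (leadMon_spec O hq.1).2 _ hcq
        rwa [hq.2.1] at this
      have hμeq : μ = leadMon O (proj f ρ) := O.rle_antisymm hμν hνμ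
      exact ⟨β, hβ, b₀, c₀, hc₀, hq.1, by rw [hq.2.1, hμeq], O.mle_trans hσ h3⟩
    · have hπδ'ne : proj f δ' ≠ 0 := fun e => h1 (by rw [e, MvPolynomial.coeff_zero])
      have hδ'ne : δ' ≠ 0 := fun e => hπδ'ne (by rw [e, proj_zero])
      have hbβne : (monomial b₀ c₀ : MvPolynomial (Fin n) K) • β ≠ 0 := by
        intro e
        apply hq.1
        have : proj f ((monomial b₀ c₀ : MvPolynomial (Fin n) K) • β) = 0 := by
          rw [e, proj_zero]
        rwa [proj_smul] at this
      have hδ''ne : δ'' ≠ 0 := fun e => hz (by rw [e, proj_zero, MvPolynomial.coeff_zero])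
      apply IH hz
      · intro μ' h
        rw [hπδ'', MvPolynomial.coeff_sub] at h
        by_cases ha : (proj f δ').coeff μ' ≠ 0
        · exact h2 μ' ha
        · push_neg at ha
          rw [ha, zero_sub] at h
          have hb : ((monomial b₀ c₀ : MvPolynomial (Fin n) K) * proj f β).coeff μ' ≠ 0 :=
            fun e => h (by rw [e, neg_zero])
          have := (leadMon_spec O hq.1).2 _ hb
          rw [hq.2.1] at this
          exact O.rle_trans this hμν
      · refine O.mle_trans ?_ h3
        have hbound : ∀ U : (Fin n →₀ ℕ) × Fin m, (δ'' U.2).coeff U.1 ≠ 0 →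
            O.mle U (sigMon O δ') := by
          intro U hU
          rw [heq] at hU
          rcases sub_coeff_cases hU with hh | hh
          · exact (sigMon_spec O hδ'ne).2 U hh
          · exact O.mle_trans ((sigMon_spec O hbβne).2 U hh) hσ
        exact hbound _ (sigMon_spec O hδ''ne).1

end Aux3

/-- If every regular S-pair of elements of `G` with signature `< T`
s-reduces to zero w.r.t. `G`, and every `eᵢ` with `eᵢ < T` s-reduces to zero w.r.t.
`G`, then `G` is a signature Gröbner basis up to signature `T`. -/
theorem statement1 {K : Type*} [Field K] {n m : ℕ} [NeZero m]
    (O : SigOrder n m) (f : Fin m → MvPolynomial (Fin n) K)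
    (T : (Fin n →₀ ℕ) × Fin m)
    (G : Finset (Fin m → MvPolynomial (Fin n) K))
    (hpair : ∀ α ∈ G, ∀ β ∈ G, IsRegularSPair O f α β →
      O.mlt (sigMon O (spair O f α β)) T → SReducesToZero O f ↑G (spair O f α β))
    (hunit : ∀ i : Fin m, O.mlt ((0 : Fin n →₀ ℕ), i) T →
      SReducesToZero O f ↑G (Pi.single i (1 : MvPolynomial (Fin n) K))) :
    IsSigGBUpTo O f ↑G T := by
  classical
  suffices main : ∀ S : (Fin n →₀ ℕ) × Fin m, O.mlt S T →
      ∀ α : Fin m → MvPolynomial (Fin n) K, α ≠ 0 → sigMon O α = S →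
      SReducesToZero O f ↑G α by
    intro S hST α hα hσ
    exact main S hST α hα hσ
  intro S₀
  refine O.mle_wf.induction (C := fun S => O.mlt S T →
      ∀ α : Fin m → MvPolynomial (Fin n) K, α ≠ 0 → sigMon O α = S →
      SReducesToZero O f ↑G α) S₀ ?_
  intro S IHsig hST
  have mltT : ∀ {S' : (Fin n →₀ ℕ) × Fin m}, O.mlt S' S → O.mlt S' T :=
    fun h => ⟨O.mle_trans h.1 hST.1, fun e => hST.2 (O.mle_antisymm hST.1 (e ▸ h.1))⟩
  intro α₀ hα₀ hσα₀
  by_cases hπα₀ : proj f α₀ = 0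
  · exact ⟨α₀, Relation.ReflTransGen.refl, hπα₀⟩
  suffices inner : ∀ ν : Fin n →₀ ℕ, ∀ α : Fin m → MvPolynomial (Fin n) K, α ≠ 0 →
      sigMon O α = S → proj f α ≠ 0 → leadMon O (proj f α) = ν →
      SReducesToZero O f ↑G α by
    exact inner _ α₀ hα₀ hσα₀ hπα₀ rfl
  intro ν₀
  refine O.rle_wf.induction (C := fun ν => ∀ α : Fin m → MvPolynomial (Fin n) K, α ≠ 0 →
      sigMon O α = S → proj f α ≠ 0 → leadMon O (proj f α) = ν →
      SReducesToZero O f ↑G α) ν₀ ?_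
  intro ν IHlt α hα hσα hπα hlmα
  set κ := sigCoeff O α with hκdef
  have hκ : κ ≠ 0 := (sigMon_spec O hα).1
  have hκS : (α S.2).coeff S.1 = κ := by rw [hκdef, sigCoeff, hσα]
  have hcν : (proj f α).coeff ν ≠ 0 := by
    rw [← hlmα]
    exact (leadMon_spec O hπα).1
  -- `SMALL`: a sig-matched ρ' cancels the signature of α
  have SMALL : ∀ ρ' : Fin m → MvPolynomial (Fin n) K, sigMon O ρ' = S →
      (ρ' S.2).coeff S.1 = κ → ∀ U : (Fin n →₀ ℕ) × Fin m,
      ((α - ρ') U.2).coeff U.1 ≠ 0 → O.mlt U S := by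
    intro ρ' hσρ' hρ'S U hU
    by_contra hc
    apply hU
    rw [Pi.sub_apply, MvPolynomial.coeff_sub]
    by_cases hUS : U = S
    · rw [hUS, hκS, hρ'S, sub_self]
    · have hSU : O.mlt S U := by
        rcases O.mle_total U S with h1 | h1
        · exact absurd ⟨h1, hUS⟩ hc
        · exact ⟨h1, fun e => hUS e.symm⟩
      have h1 : (α U.2).coeff U.1 = 0 := vcoeff_eq_zero_of_sig_mlt O (by rw [hσα]; exact hSU)
      have h2 : (ρ' U.2).coeff U.1 = 0 := vcoeff_eq_zero_of_sig_mlt O (by rw [hσρ']; exact hSU)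
      rw [h1, h2, sub_self]
  -- `ADDF`: if a syzygy with the matching signature term exists, α reduces to zero
  have ADDF : ∀ ρ : Fin m → MvPolynomial (Fin n) K, proj f ρ = 0 → sigMon O ρ = S →
      sigCoeff O ρ = κ → SReducesToZero O f ↑G α := by
    intro ρ hπρ hσρ hκρ
    have hρS : (ρ S.2).coeff S.1 = κ := by rw [← hκρ, sigCoeff, hσρ]
    have hρne : ρ ≠ 0 := fun e => hκ (by rw [← hρS, e, Pi.zero_apply, MvPolynomial.coeff_zero])
    have hsmall := SMALL ρ hσρ hρS
    have hδne : α - ρ ≠ 0 := by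
      intro e
      apply hπα
      have : proj f (α - ρ) = 0 := by rw [e, proj_zero]
      rw [proj_sub, hπρ, sub_zero] at this
      exact this
    have hmlt : O.mlt (sigMon O (α - ρ)) S := hsmall _ (sigMon_spec O hδne).1
    obtain ⟨τ, hchδ, hτ⟩ := IHsig _ ⟨hmlt.1, hmlt.2⟩ (mltT hmlt) (α - ρ) hδne rfl
    have hch2 := add_syzygy_chain O f ↑G hπρ (by rw [hρS]; exact hκ)
      (fun U h => by rw [← hσρ]; exact (sigMon_spec O hρne).2 U h) hchδ hsmall
    rw [sub_add_cancel] at hch2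
    exact ⟨τ + ρ, hch2, by rw [proj_add, hτ, hπρ, add_zero]⟩
  -- `FINISH`: a top s-reduction of α finishes the proof
  have FINISH : ∀ β' ∈ (↑G : Set (Fin m → MvPolynomial (Fin n) K)),
      ∀ (b₀' : Fin n →₀ ℕ) (c' : K), c' ≠ 0 →
      leadTerm O ((monomial b₀' c' : MvPolynomial (Fin n) K) * proj f β') =
        monomial ν ((proj f α).coeff ν) →
      O.mle (sigMon O ((monomial b₀' c' : MvPolynomial (Fin n) K) • β')) S →
      SReducesToZero O f ↑G α := by
    intro β' hβ' b₀' c' hc' hltm hσb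
    have hstep : Step O f ↑G α (α - (monomial b₀' c' : MvPolynomial (Fin n) K) • β') :=
      ⟨β', hβ', monomial b₀' c', ν, ⟨⟨b₀', c', hc', rfl⟩, hcν, hltm,
        by rw [hσα]; exact hσb⟩, rfl⟩
    set α₁ := α - (monomial b₀' c' : MvPolynomial (Fin n) K) • β' with hα₁def
    have hq := of_leadTerm_eq O hcν hltm
    have hπα₁ : proj f α₁ = proj f α -
        (monomial b₀' c' : MvPolynomial (Fin n) K) * proj f β' := by
      rw [hα₁def, proj_sub, proj_smul]
    have hcν1 : (proj f α₁).coeff ν = 0 := by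
      rw [hπα₁, MvPolynomial.coeff_sub, hq.2.2, sub_self]
    have hbound : ∀ μ', (proj f α₁).coeff μ' ≠ 0 → O.rle μ' ν := by
      intro μ' h
      rw [hπα₁, MvPolynomial.coeff_sub] at h
      by_cases ha : (proj f α).coeff μ' ≠ 0
      · rw [← hlmα]
        exact (leadMon_spec O hπα).2 μ' ha
      · push_neg at ha
        rw [ha, zero_sub] at h
        have hb : ((monomial b₀' c' : MvPolynomial (Fin n) K) * proj f β').coeff μ' ≠ 0 :=
          fun e => h (by rw [e, neg_zero])
        have := (leadMon_spec O hq.1).2 _ hb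
        rwa [hq.2.1] at this
    have hbβne : (monomial b₀' c' : MvPolynomial (Fin n) K) • β' ≠ 0 := by
      intro e
      apply hq.1
      have : proj f ((monomial b₀' c' : MvPolynomial (Fin n) K) • β') = 0 := by
        rw [e, proj_zero]
      rwa [proj_smul] at this
    by_cases hz : proj f α₁ = 0
    · exact ⟨α₁, Relation.ReflTransGen.single hstep, hz⟩
    · have hα₁ne : α₁ ≠ 0 := fun e => hz (by rw [e, proj_zero])
      have hlm₁ : O.rlt (leadMon O (proj f α₁)) ν := by
        have h1 := (leadMon_spec O hz).1
        exact ⟨hbound _ h1, fun e => h1 (by rw [e]; exact hcν1)⟩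
      have hσbound : ∀ U : (Fin n →₀ ℕ) × Fin m, (α₁ U.2).coeff U.1 ≠ 0 → O.mle U S := by
        intro U h
        rw [hα₁def] at h
        rcases sub_coeff_cases h with h | h
        · rw [← hσα]
          exact (sigMon_spec O hα).2 U h
        · exact O.mle_trans ((sigMon_spec O hbβne).2 U h) hσb
      have hred₁ : SReducesToZero O f ↑G α₁ := by
        by_cases hSc : (α₁ S.2).coeff S.1 = 0
        · have hmlt : O.mlt (sigMon O α₁) S := by
            obtain ⟨h1, _⟩ := sigMon_spec O hα₁ne
            exact ⟨hσbound _ h1, fun e => h1 (by rw [e]; exact hSc)⟩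
          exact IHsig _ ⟨hmlt.1, hmlt.2⟩ (mltT hmlt) α₁ hα₁ne rfl
        · have hsig₁ : sigMon O α₁ = S := sigMon_eq O hSc hσbound
          exact IHlt _ hlm₁ α₁ hα₁ne hsig₁ hz rfl
      obtain ⟨γ', hchg, h0⟩ := hred₁
      exact ⟨γ', Relation.ReflTransGen.head hstep hchg, h0⟩
  -- the starting element: κ·x^{S.1}·e_{S.2}
  have h0S : O.mle ((0 : Fin n →₀ ℕ), S.2) S := (O.compat 0 S.1 S.2).mp (O.rle_zero S.1)
  have h0T : O.mlt ((0 : Fin n →₀ ℕ), S.2) T :=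
    ⟨O.mle_trans h0S hST.1, fun e => hST.2 (O.mle_antisymm hST.1 (by rw [← e]; exact h0S))⟩
  obtain ⟨τu, hchu, hτu⟩ := hunit S.2 h0T
  obtain ⟨hσ1, hκ1, hne1⟩ := sigMon_single_one (O := O) (K := K) (n := n) S.2
  set γ₀ : Fin m → MvPolynomial (Fin n) K :=
    (monomial S.1 κ : MvPolynomial (Fin n) K) •
      (Pi.single S.2 1 : Fin m → MvPolynomial (Fin n) K) with hγ₀def
  have hσγ₀ : sigMon O γ₀ = S := by
    rw [hγ₀def, sigMon_monomial_smul O hne1 hκ, hσ1, add_zero]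
  have hκγ₀ : sigCoeff O γ₀ = κ := by
    rw [hγ₀def, sigCoeff_monomial_smul O hne1 hκ, hκ1, mul_one]
  have hchγ₀ : Relation.ReflTransGen (Step O f ↑G) γ₀
      ((monomial S.1 κ : MvPolynomial (Fin n) K) • τu) := chain_smul O f ↑G hκ hchu
  have hτγ₀ : proj f ((monomial S.1 κ : MvPolynomial (Fin n) K) • τu) = 0 := by
    rw [proj_smul, hτu, mul_zero]
  -- MAIN induction on the lead monomial of π ρ
  have MAIN : ∀ lam : Fin n →₀ ℕ, ∀ ρ γe : Fin m → MvPolynomial (Fin n) K,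
      Relation.ReflTransGen (Step O f ↑G) ρ γe → proj f γe = 0 → sigMon O ρ = S →
      sigCoeff O ρ = κ → (proj f ρ = 0 ∨ O.rle (leadMon O (proj f ρ)) lam) →
      SReducesToZero O f ↑G α := by
    intro lam₀
    refine O.rle_wf.induction (C := fun lam => ∀ ρ γe : Fin m → MvPolynomial (Fin n) K,
      Relation.ReflTransGen (Step O f ↑G) ρ γe → proj f γe = 0 → sigMon O ρ = S →
      sigCoeff O ρ = κ → (proj f ρ = 0 ∨ O.rle (leadMon O (proj f ρ)) lam) →
      SReducesToZero O f ↑G α) lam₀ ?_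
    intro lam IHlam ρ γe hch hγe
    induction hch using Relation.ReflTransGen.head_induction_on with
    | refl =>
      intro hσρ hκρ _
      exact ADDF γe hγe hσρ hκρ
    | @head ρ' ρ₁ hstep htail IH =>
      intro hσρ hκρ hlm
      by_cases hπρ : proj f ρ' = 0
      · exact ADDF ρ' hπρ hσρ hκρ
      obtain ⟨β, hβ, b, μ, ⟨⟨b₀, c₀, hc₀, rfl⟩, hcf, hlt, hσb⟩, heq⟩ := hstep
      have hq := of_leadTerm_eq O hcf hlt
      have hπβ : proj f β ≠ 0 := fun e => hq.1 (by rw [e, mul_zero])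
      have hβne : β ≠ 0 := fun e => hπβ (by rw [e, proj_zero])
      have hbβne : (monomial b₀ c₀ : MvPolynomial (Fin n) K) • β ≠ 0 := by
        intro e
        apply hq.1
        have : proj f ((monomial b₀ c₀ : MvPolynomial (Fin n) K) • β) = 0 := by
          rw [e, proj_zero]
        rwa [proj_smul] at this
      have hρne : ρ' ≠ 0 := fun e => hπρ (by rw [e, proj_zero])
      have hρ'S : (ρ' S.2).coeff S.1 = κ := by rw [← hκρ, sigCoeff, hσρ]
      have hσbform : sigMon O ((monomial b₀ c₀ : MvPolynomial (Fin n) K) • β)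
          = (b₀ + (sigMon O β).1, (sigMon O β).2) := sigMon_monomial_smul O hβne hc₀
      have hμlam : O.rle μ lam :=
        O.rle_trans ((leadMon_spec O hπρ).2 μ hcf) (hlm.resolve_left hπρ)
      rw [hσρ] at hσb
      by_cases hsc : sigMon O ((monomial b₀ c₀ : MvPolynomial (Fin n) K) • β) = S
      · -- CASE II : singular-signature reducer
        have hμeq : μ = b₀ + leadMon O (proj f β) := by
          rw [← hq.2.1, leadMon_monomial_mul O hπβ hc₀]
        have hBS : (b₀ + (sigMon O β).1, (sigMon O β).2) = S := by
          rw [← hσbform]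
          exact hsc
        by_cases hμν : μ = ν
        · -- top-reduce α by β itself
          have hlc : (proj f β).coeff (leadMon O (proj f β)) ≠ 0 := (leadMon_spec O hπβ).1
          have hc'0 : (proj f α).coeff ν / (proj f β).coeff (leadMon O (proj f β)) ≠ 0 :=
            div_ne_zero hcν hlc
          apply FINISH β hβ b₀ _ hc'0
          · rw [leadTerm_monomial_mul O hπβ hc'0, ← hμeq, hμν, div_mul_cancel₀ _ hlc]
          · rw [sigMon_monomial_smul O hβne hc'0, hBS]
            exact O.mle_refl S
        · -- μ ≠ ν : compare with a sig-matched multiple of β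
          have hscβ : sigCoeff O β ≠ 0 := (sigMon_spec O hβne).1
          have hc'0 : κ / sigCoeff O β ≠ 0 := div_ne_zero hκ hscβ
          set c' := κ / sigCoeff O β with hc'def
          set ρ'' := (monomial b₀ c' : MvPolynomial (Fin n) K) • β with hρ''def
          have hσρ'' : sigMon O ρ'' = S := by
            rw [hρ''def, sigMon_monomial_smul O hβne hc'0]
            exact hBS
          have hκρ'' : sigCoeff O ρ'' = κ := by
            rw [hρ''def, sigCoeff_monomial_smul O hβne hc'0, hc'def,
              div_mul_cancel₀ _ hscβ]
          have hρ''S : (ρ'' S.2).coeff S.1 = κ := by rw [← hκρ'', sigCoeff, hσρ'']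
          have hπρ'' : proj f ρ'' = (monomial b₀ c' : MvPolynomial (Fin n) K) * proj f β := by
            rw [hρ''def, proj_smul]
          have hπρ''ne : proj f ρ'' ≠ 0 := by
            rw [hπρ'']
            exact mul_ne_zero (fun e => hc'0 (MvPolynomial.monomial_eq_zero.mp e)) hπβ
          have hlmρ'' : leadMon O (proj f ρ'') = μ := by
            rw [hπρ'', leadMon_monomial_mul O hπβ hc'0, hμeq]
          set δ' := α - ρ'' with hδ'def
          have hπδ' : proj f δ' = proj f α - proj f ρ'' := by rw [hδ'def, proj_sub]
          have hδ'small := SMALL ρ'' hσρ'' hρ''S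
          -- in both cases the lead monomial of π δ' is max(μ, ν) which is ≠ the other
          rcases O.rle_total μ ν with hcmp | hcmp
          · -- μ < ν : δ' has lead mon ν; topfind gives a top-reducer of α
            have hmltμν : O.rlt μ ν := ⟨hcmp, hμν⟩
            have hcρ''ν : (proj f ρ'').coeff ν = 0 :=
              coeff_eq_zero_of_rlt O (by rw [hlmρ'']; exact hmltμν)
            have hcδ'ν : (proj f δ').coeff ν = (proj f α).coeff ν := by
              rw [hπδ', MvPolynomial.coeff_sub, hcρ''ν, sub_zero]
            have hπδ'ne : proj f δ' ≠ 0 :=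
              fun e => hcν (by rw [← hcδ'ν, e, MvPolynomial.coeff_zero])
            have hδ'ne : δ' ≠ 0 := fun e => hπδ'ne (by rw [e, proj_zero])
            have hσδ' : O.mlt (sigMon O δ') S := hδ'small _ (sigMon_spec O hδ'ne).1
            obtain ⟨τ', hch', h0'⟩ := IHsig _ ⟨hσδ'.1, hσδ'.2⟩ (mltT hσδ') δ' hδ'ne rfl
            have hlmδ' : leadMon O (proj f δ') = ν := by
              apply leadMon_eq O (by rw [hcδ'ν]; exact hcν)
              intro μ' h
              rw [hπδ', MvPolynomial.coeff_sub] at h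
              by_cases ha : (proj f α).coeff μ' ≠ 0
              · rw [← hlmα]
                exact (leadMon_spec O hπα).2 μ' ha
              · push_neg at ha
                rw [ha, zero_sub] at h
                have hb : (proj f ρ'').coeff μ' ≠ 0 := fun e => h (by rw [e, neg_zero])
                have := (leadMon_spec O hπρ''ne).2 _ hb
                rw [hlmρ''] at this
                exact O.rle_trans this hcmp
            obtain ⟨β', hβ', b₀', c₀', hc₀', hq'ne, hlm', hσ'⟩ := topfind O f ↑G hch' h0' hπδ'ne
            rw [hlmδ'] at hlm'
            have hπβ' : proj f β' ≠ 0 := fun e => hq'ne (by rw [e, mul_zero])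
            have hβ'ne : β' ≠ 0 := fun e => hπβ' (by rw [e, proj_zero])
            have hb'eq : b₀' + leadMon O (proj f β') = ν := by
              rw [← leadMon_monomial_mul O hπβ' hc₀', hlm']
            have hlc₂ : (proj f β').coeff (leadMon O (proj f β')) ≠ 0 := (leadMon_spec O hπβ').1
            have hc''0 : (proj f α).coeff ν / (proj f β').coeff (leadMon O (proj f β')) ≠ 0 :=
              div_ne_zero hcν hlc₂
            apply FINISH β' hβ' b₀' _ hc''0
            · rw [leadTerm_monomial_mul O hπβ' hc''0, hb'eq, div_mul_cancel₀ _ hlc₂]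
            · rw [sigMon_monomial_smul O hβ'ne hc''0,
                ← sigMon_monomial_smul O hβ'ne hc₀']
              exact O.mle_trans hσ' hσδ'.1
          · -- ν < μ : δ' has lead mon μ; form a regular S-pair
            have hmltνμ : O.rlt ν μ := ⟨hcmp, fun e => hμν e.symm⟩
            have hcαμ : (proj f α).coeff μ = 0 :=
              coeff_eq_zero_of_rlt O (by rw [hlmα]; exact hmltνμ)
            have hcρ''μ : (proj f ρ'').coeff μ ≠ 0 := by
              rw [← hlmρ'']
              exact (leadMon_spec O hπρ''ne).1
            have hcδ'μ : (proj f δ').coeff μ ≠ 0 := by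
              rw [hπδ', MvPolynomial.coeff_sub, hcαμ, zero_sub]
              exact fun e => hcρ''μ (by rwa [neg_eq_zero] at e)
            have hπδ'ne : proj f δ' ≠ 0 :=
              fun e => hcδ'μ (by rw [e, MvPolynomial.coeff_zero])
            have hδ'ne : δ' ≠ 0 := fun e => hπδ'ne (by rw [e, proj_zero])
            have hσδ' : O.mlt (sigMon O δ') S := hδ'small _ (sigMon_spec O hδ'ne).1
            obtain ⟨τ', hch', h0'⟩ := IHsig _ ⟨hσδ'.1, hσδ'.2⟩ (mltT hσδ') δ' hδ'ne rfl
            have hlmδ' : leadMon O (proj f δ') = μ := by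
              apply leadMon_eq O hcδ'μ
              intro μ' h
              rw [hπδ', MvPolynomial.coeff_sub] at h
              by_cases ha : (proj f α).coeff μ' ≠ 0
              · have := (leadMon_spec O hπα).2 μ' ha
                rw [hlmα] at this
                exact O.rle_trans this hcmp
              · push_neg at ha
                rw [ha, zero_sub] at h
                have hb : (proj f ρ'').coeff μ' ≠ 0 := fun e => h (by rw [e, neg_zero])
                have := (leadMon_spec O hπρ''ne).2 _ hb
                rwa [hlmρ''] at this
            obtain ⟨β', hβ', b₀', c₀', hc₀', hq'ne, hlm', hσ'⟩ := topfind O f ↑G hch' h0' hπδ'ne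
            rw [hlmδ'] at hlm'
            have hπβ' : proj f β' ≠ 0 := fun e => hq'ne (by rw [e, mul_zero])
            have hβ'ne : β' ≠ 0 := fun e => hπβ' (by rw [e, proj_zero])
            have hb'eq : b₀' + leadMon O (proj f β') = μ := by
              rw [← leadMon_monomial_mul O hπβ' hc₀', hlm']
            -- notation for the lcm construction
            set m₁ := leadMon O (proj f β) with hm₁def
            set m₂ := leadMon O (proj f β') with hm₂def
            set L := monLcm m₁ m₂ with hLdef
            have hm₁L : m₁ ≤ L := le_monLcm_left m₁ m₂
            have hm₂L : m₂ ≤ L := le_monLcm_right m₁ m₂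
            have hm₁μ : m₁ ≤ μ := by rw [hμeq]; exact le_add_self
            have hm₂μ : m₂ ≤ μ := by rw [← hb'eq]; exact le_add_self
            have hLμ : L ≤ μ := monLcm_le hm₁μ hm₂μ
            set e := μ - L with hedef
            have heL : e + L = μ := by rw [hedef, tsub_add_cancel_of_le hLμ]
            have hb₀e : b₀ = e + (L - m₁) := by
              have h1 : (e + (L - m₁)) + m₁ = μ := by
                rw [add_assoc, tsub_add_cancel_of_le hm₁L, heL]
              have h2 : b₀ + m₁ = μ := hμeq.symm
              exact add_right_cancel (h2.trans h1.symm)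
            have hb₀'e : b₀' = e + (L - m₂) := by
              have h1 : (e + (L - m₂)) + m₂ = μ := by
                rw [add_assoc, tsub_add_cancel_of_le hm₂L, heL]
              exact add_right_cancel (hb'eq.trans h1.symm)
            -- the S-pair
            set u₁ := (monomial (L - m₁) ((leadCoeff O (proj f β))⁻¹) :
              MvPolynomial (Fin n) K) • β with hu₁def
            set u₂ := (monomial (L - m₂) ((leadCoeff O (proj f β'))⁻¹) :
              MvPolynomial (Fin n) K) • β' with hu₂def
            have hζdef : spair O f β β' = u₁ - u₂ := rfl
            have hlc₁ : leadCoeff O (proj f β) ≠ 0 := (leadMon_spec O hπβ).1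
            have hlc₂ : leadCoeff O (proj f β') ≠ 0 := (leadMon_spec O hπβ').1
            have hinv₁ : (leadCoeff O (proj f β))⁻¹ ≠ 0 := inv_ne_zero hlc₁
            have hinv₂ : (leadCoeff O (proj f β'))⁻¹ ≠ 0 := inv_ne_zero hlc₂
            have hu₁ne : u₁ ≠ 0 := smul_pi_ne_zero hβne hinv₁
            have hu₂ne : u₂ ≠ 0 := smul_pi_ne_zero hβ'ne hinv₂
            have hσu₁ : sigMon O u₁ = ((L - m₁) + (sigMon O β).1, (sigMon O β).2) :=
              sigMon_monomial_smul O hβne hinv₁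
            have hσu₂ : sigMon O u₂ = ((L - m₂) + (sigMon O β').1, (sigMon O β').2) :=
              sigMon_monomial_smul O hβ'ne hinv₂
            have hES₁ : (e + (sigMon O u₁).1, (sigMon O u₁).2) = S := by
              rw [hσu₁, ← add_assoc, ← hb₀e]
              exact hBS
            have hσ'form : sigMon O ((monomial b₀' c₀' : MvPolynomial (Fin n) K) • β')
                = (b₀' + (sigMon O β').1, (sigMon O β').2) := sigMon_monomial_smul O hβ'ne hc₀'
            have hES₂mlt : O.mlt (e + (sigMon O u₂).1, (sigMon O u₂).2) S := by
              have he2 : (e + (sigMon O u₂).1, (sigMon O u₂).2)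
                  = (b₀' + (sigMon O β').1, (sigMon O β').2) := by
                rw [hσu₂, ← add_assoc, ← hb₀'e]
              rw [he2, ← hσ'form]
              exact O.mlt_of_mle_of_mlt hσ' hσδ'
            have hu₂u₁ : O.mlt (sigMon O u₂) (sigMon O u₁) := by
              apply O.mlt_of_add (c := e)
              rw [hES₁]
              exact hES₂mlt
            obtain ⟨hσζ, hζcoeff, hζne⟩ := sigMon_sub O hu₁ne hu₂ne hu₂u₁
            rw [← hζdef] at hσζ hζne
            have hreg : IsRegularSPair O f β β' :=
              ⟨hπβ, hπβ', fun h => hu₂u₁.2 h.symm⟩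
            have hζT : O.mlt (sigMon O (spair O f β β')) T := by
              have h1 : O.mle (sigMon O (spair O f β β')) S := by
                rw [hσζ]
                have := O.mle_add_self e (sigMon O u₁)
                rwa [hES₁] at this
              exact ⟨O.mle_trans h1 hST.1,
                fun e' => hST.2 (O.mle_antisymm hST.1 (e' ▸ h1))⟩
            obtain ⟨τζ, hchζ, hτζ⟩ := hpair β (Finset.mem_coe.mp hβ) β'
              (Finset.mem_coe.mp hβ') hreg hζT
            -- the projection of the S-pair drops below L
            have hπζ : proj f (spair O f β β') =
                (monomial (L - m₁) ((leadCoeff O (proj f β))⁻¹) : MvPolynomial (Fin n) K)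
                  * proj f β -
                (monomial (L - m₂) ((leadCoeff O (proj f β'))⁻¹) : MvPolynomial (Fin n) K)
                  * proj f β' := by
              rw [hζdef, hu₁def, hu₂def, proj_sub, proj_smul, proj_smul]
            have hLsplit₁ : (L - m₁) + m₁ = L := tsub_add_cancel_of_le hm₁L
            have hLsplit₂ : (L - m₂) + m₂ = L := tsub_add_cancel_of_le hm₂L
            have hco₁ : ((monomial (L - m₁) ((leadCoeff O (proj f β))⁻¹) :
                MvPolynomial (Fin n) K) * proj f β).coeff L
                = (leadCoeff O (proj f β))⁻¹ * (proj f β).coeff m₁ := by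
              rw [coeff_monomial_mul', if_pos tsub_le_self, tsub_tsub_cancel_of_le hm₁L]
            have hco₂ : ((monomial (L - m₂) ((leadCoeff O (proj f β'))⁻¹) :
                MvPolynomial (Fin n) K) * proj f β').coeff L
                = (leadCoeff O (proj f β'))⁻¹ * (proj f β').coeff m₂ := by
              rw [coeff_monomial_mul', if_pos tsub_le_self, tsub_tsub_cancel_of_le hm₂L]
            have hπζL : (proj f (spair O f β β')).coeff L = 0 := by
              rw [hπζ, MvPolynomial.coeff_sub, hco₁, hco₂,
                show (proj f β).coeff m₁ = leadCoeff O (proj f β) from rfl,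
                show (proj f β').coeff m₂ = leadCoeff O (proj f β') from rfl,
                inv_mul_cancel₀ hlc₁, inv_mul_cancel₀ hlc₂, sub_self]
            have hπζbound : ∀ μ', (proj f (spair O f β β')).coeff μ' ≠ 0 → O.rle μ' L := by
              intro μ' h
              rw [hπζ, MvPolynomial.coeff_sub] at h
              have hprod₁ : (monomial (L - m₁) ((leadCoeff O (proj f β))⁻¹) :
                  MvPolynomial (Fin n) K) * proj f β ≠ 0 :=
                mul_ne_zero (fun e' => hinv₁ (MvPolynomial.monomial_eq_zero.mp e')) hπβ
              have hprod₂ : (monomial (L - m₂) ((leadCoeff O (proj f β'))⁻¹) :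
                  MvPolynomial (Fin n) K) * proj f β' ≠ 0 :=
                mul_ne_zero (fun e' => hinv₂ (MvPolynomial.monomial_eq_zero.mp e')) hπβ'
              by_cases ha : ((monomial (L - m₁) ((leadCoeff O (proj f β))⁻¹) :
                  MvPolynomial (Fin n) K) * proj f β).coeff μ' ≠ 0
              · have := (leadMon_spec O hprod₁).2 μ' ha
                rwa [leadMon_monomial_mul O hπβ hinv₁, hLsplit₁] at this
              · push_neg at ha
                rw [ha, zero_sub] at h
                have hb : ((monomial (L - m₂) ((leadCoeff O (proj f β'))⁻¹) :
                    MvPolynomial (Fin n) K) * proj f β').coeff μ' ≠ 0 :=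
                  fun e' => h (by rw [e', neg_zero])
                have := (leadMon_spec O hprod₂).2 μ' hb
                rwa [leadMon_monomial_mul O hπβ' hinv₂, hLsplit₂] at this
            -- scaled version of the S-pair
            have hκζ : sigCoeff O (spair O f β β') ≠ 0 := by
              rw [sigCoeff, hσζ, hζdef]
              rw [hζcoeff]
              exact (sigMon_spec O hu₁ne).1
            have hc₃0 : κ / sigCoeff O (spair O f β β') ≠ 0 := div_ne_zero hκ hκζ
            set c₃ := κ / sigCoeff O (spair O f β β') with hc₃def
            set P := (monomial e c₃ : MvPolynomial (Fin n) K) • spair O f β β' with hPdef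
            have hσP : sigMon O P = S := by
              rw [hPdef, sigMon_monomial_smul O hζne hc₃0, hσζ]
              exact hES₁
            have hκP : sigCoeff O P = κ := by
              rw [hPdef, sigCoeff_monomial_smul O hζne hc₃0, hc₃def,
                div_mul_cancel₀ _ hκζ]
            have hchP : Relation.ReflTransGen (Step O f ↑G) P
                ((monomial e c₃ : MvPolynomial (Fin n) K) • τζ) :=
              chain_smul O f ↑G hc₃0 hchζ
            have hτP : proj f ((monomial e c₃ : MvPolynomial (Fin n) K) • τζ) = 0 := by
              rw [proj_smul, hτζ, mul_zero]
            by_cases hπζ0 : proj f (spair O f β β') = 0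
            · exact ADDF P (by rw [hPdef, proj_smul, hπζ0, mul_zero]) hσP hκP
            · have hlmζ : O.rlt (leadMon O (proj f (spair O f β β'))) L := by
                have h1 := (leadMon_spec O hπζ0).1
                exact ⟨hπζbound _ h1, fun e' => h1 (by rw [e']; exact hπζL)⟩
              have hπP : proj f P = (monomial e c₃ : MvPolynomial (Fin n) K) *
                  proj f (spair O f β β') := by rw [hPdef, proj_smul]
              have hπPne : proj f P ≠ 0 := by
                rw [hπP]
                exact mul_ne_zero (fun e' => hc₃0 (MvPolynomial.monomial_eq_zero.mp e')) hπζ0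
              have hlmP : leadMon O (proj f P) = e + leadMon O (proj f (spair O f β β')) := by
                rw [hπP, leadMon_monomial_mul O hπζ0 hc₃0]
              have hdec : O.rlt (leadMon O (proj f P)) lam := by
                have h1 : O.rlt (e + leadMon O (proj f (spair O f β β')))
                    (e + L) := O.rlt_add e hlmζ
                rw [heL] at h1
                rw [hlmP]
                exact O.rlt_of_rlt_of_rle h1 hμlam
              exact IHlam _ hdec P _ hchP hτP hσP hκP (Or.inr (O.rle_refl _))
      · -- CASE I : strictly smaller signature reducer; recurse along the chain
        have hmltb : O.mlt (sigMon O ((monomial b₀ c₀ : MvPolynomial (Fin n) K) • β)) S :=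
          ⟨hσb, hsc⟩
        have hcbS : (((monomial b₀ c₀ : MvPolynomial (Fin n) K) • β) S.2).coeff S.1 = 0 :=
          vcoeff_eq_zero_of_sig_mlt O hmltb
        have hρ₁S : (ρ₁ S.2).coeff S.1 = κ := by
          rw [heq, Pi.sub_apply, MvPolynomial.coeff_sub, hρ'S, hcbS, sub_zero]
        have hσρ₁ : sigMon O ρ₁ = S := by
          apply sigMon_eq O (by rw [hρ₁S]; exact hκ)
          intro U hU
          rw [heq] at hU
          rcases sub_coeff_cases hU with h1 | h1
          · rw [← hσρ]
            exact (sigMon_spec O hρne).2 U h1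
          · exact O.mle_trans ((sigMon_spec O hbβne).2 U h1) hσb
        have hκρ₁ : sigCoeff O ρ₁ = κ := by rw [sigCoeff, hσρ₁, hρ₁S]
        apply IH hσρ₁ hκρ₁
        by_cases hz : proj f ρ₁ = 0
        · exact Or.inl hz
        · refine Or.inr ?_
          have hπρ₁ : proj f ρ₁ = proj f ρ' -
              (monomial b₀ c₀ : MvPolynomial (Fin n) K) * proj f β := by
            rw [heq, proj_sub, proj_smul]
          have hbound : ∀ μ', (proj f ρ₁).coeff μ' ≠ 0 → O.rle μ' lam := by
            intro μ' h
            rw [hπρ₁, MvPolynomial.coeff_sub] at h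
            by_cases ha : (proj f ρ').coeff μ' ≠ 0
            · exact O.rle_trans ((leadMon_spec O hπρ).2 μ' ha) (hlm.resolve_left hπρ)
            · push_neg at ha
              rw [ha, zero_sub] at h
              have hb : ((monomial b₀ c₀ : MvPolynomial (Fin n) K) * proj f β).coeff μ' ≠ 0 :=
                fun e => h (by rw [e, neg_zero])
              have := (leadMon_spec O hq.1).2 _ hb
              rw [hq.2.1] at this
              exact O.rle_trans this hμlam
          exact hbound _ (leadMon_spec O hz).1
  by_cases hπγ₀ : proj f γ₀ = 0
  · exact ADDF γ₀ hπγ₀ hσγ₀ hκγ₀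
  · exact MAIN (leadMon O (proj f γ₀)) γ₀ _ hchγ₀ hτγ₀ hσγ₀ hκγ₀ (Or.inr (O.rle_refl _))

end SigGB
end
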